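/- For p a power of two and all blocks equal, m_i = b for all i, the recurrence C[i,i]=0, C[i,j]=min_k[max(C[i,k],C[k+1,j]) + α + β·min(S[i,k],S[k+1,j])] satisfies C[0,p−1] = (log₂ p)·α + β·(p−1)·b. -/

import Mathlib

open Finset

/-- Sum of block sizes over the consecutive processor range `[i, k]`. -/
noncomputable def segSum (m : ℕ → ℝ) (i k : ℕ) : ℝ := ∑ t ∈ Finset.Icc i k, m t

/-- Homogeneous ordered-tree dynamic programming table (`γ = 0`):
`C[i,i] = 0` and, for `i < j`,
`C[i,j] = min_{i ≤ k < j} [max(C[i,k], C[k+1,j]) + α + β * min(S[i,k], S[k+1,j])]`. -/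
noncomputable def dpC (m : ℕ → ℝ) (α β : ℝ) : ℕ → ℕ → ℝ
  | i, j =>
    if h : j ≤ i then 0
    else
      ((Finset.Ico i j).attach.inf'
        (Finset.attach_nonempty_iff.mpr (by rw [Finset.nonempty_Ico]; omega)))
        fun k =>
          have hk := Finset.mem_Ico.mp k.2
          max (dpC m α β i k.1) (dpC m α β (k.1 + 1) j) +
            (α + β * min (segSum m i k.1) (segSum m (k.1 + 1) j))
termination_by i j => j - i
decreasing_by
  · omega
  · omega

/-
A range of `n` equal blocks costs `T n = ⌈log₂ n⌉ α + β (n - 1) b`. Splitting it into parts of sizes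
`a ≤ c` costs `T c + α + β a b`, since `T` is monotone; this is at least `T (a + c)` because
`a + c ≤ 2c` raises `⌈log₂⌉` by at most one, with equality when `c` is the largest power of two
below `a + c`. Strong induction on the length of the range then gives `C[i,j] = T (j + 1 - i)`.
-/

lemma segSum_const (b : ℝ) (i k : ℕ) :
    segSum (fun _ => b) i k = ((k + 1 - i : ℕ) : ℝ) * b := by
  simp [segSum, nsmul_eq_mul]

section dpC

variable {m : ℕ → ℝ} {α β : ℝ} {i j : ℕ}

lemma dpC_of_le (h : j ≤ i) : dpC m α β i j = 0 := by
  rw [dpC, dif_pos h]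

lemma dpC_le {k : ℕ} (hk : k ∈ Ico i j) :
    dpC m α β i j ≤ max (dpC m α β i k) (dpC m α β (k + 1) j) +
      (α + β * min (segSum m i k) (segSum m (k + 1) j)) := by
  rw [dpC, dif_neg (by simp at hk; omega)]
  exact inf'_le _ (mem_attach _ ⟨k, hk⟩)

lemma le_dpC {x : ℝ} (hij : i < j)
    (h : ∀ k ∈ Ico i j, x ≤ max (dpC m α β i k) (dpC m α β (k + 1) j) +
      (α + β * min (segSum m i k) (segSum m (k + 1) j))) :
    x ≤ dpC m α β i j := by
  rw [dpC, dif_neg (not_le.2 hij)]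
  exact le_inf' _ _ fun k _ => h k k.2

end dpC

theorem Nat.clog_two_add_le {a c : ℕ} (hac : a ≤ c) : clog 2 (a + c) ≤ clog 2 c + 1 :=
  clog_le_of_le_pow <| by
    have := le_pow_clog one_lt_two c
    rw [pow_succ]
    omega

noncomputable def treeCost (α β b : ℝ) (n : ℕ) : ℝ :=
  Nat.clog 2 n * α + β * (((n : ℝ) - 1) * b)

noncomputable def splitCost (α β b : ℝ) (a c : ℕ) : ℝ :=
  max (treeCost α β b a) (treeCost α β b c) + (α + β * min (a * b) (c * b))

section treeCost

variable {α β b : ℝ}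

lemma treeCost_mono (hα : 0 ≤ α) (hβ : 0 ≤ β) (hb : 0 ≤ b) : Monotone (treeCost α β b) := by
  intro m n h
  have hlog : (Nat.clog 2 m : ℝ) ≤ Nat.clog 2 n := by exact_mod_cast Nat.clog_mono_right 2 h
  have hsize : ((m : ℝ) - 1) * b ≤ ((n : ℝ) - 1) * b := by gcongr
  unfold treeCost
  gcongr

lemma treeCost_add_le (hα : 0 ≤ α) {a c : ℕ} (hac : a ≤ c) :
    treeCost α β b (a + c) ≤ treeCost α β b c + (α + β * (a * b)) := by
  have hlog : (Nat.clog 2 (a + c) : ℝ) ≤ Nat.clog 2 c + 1 := by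
    exact_mod_cast Nat.clog_two_add_le hac
  unfold treeCost
  push_cast
  nlinarith [mul_le_mul_of_nonneg_right hlog hα]

lemma treeCost_add_eq {a c : ℕ} (h : Nat.clog 2 (a + c) = Nat.clog 2 c + 1) :
    treeCost α β b (a + c) = treeCost α β b c + (α + β * (a * b)) := by
  unfold treeCost
  rw [h]
  push_cast
  ring

lemma splitCost_comm (a c : ℕ) : splitCost α β b a c = splitCost α β b c a := by
  rw [splitCost, splitCost, max_comm, min_comm]

lemma splitCost_of_le (hα : 0 ≤ α) (hβ : 0 ≤ β) (hb : 0 ≤ b) {a c : ℕ} (hac : a ≤ c) :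
    splitCost α β b a c = treeCost α β b c + (α + β * (a * b)) := by
  rw [splitCost, max_eq_right (treeCost_mono hα hβ hb hac),
    min_eq_left (by gcongr)]

lemma treeCost_add_le_splitCost (hα : 0 ≤ α) (hβ : 0 ≤ β) (hb : 0 ≤ b) (a c : ℕ) :
    treeCost α β b (a + c) ≤ splitCost α β b a c := by
  wlog hac : a ≤ c generalizing a c
  · rw [add_comm, splitCost_comm]
    exact this c a (le_of_not_ge hac)
  rw [splitCost_of_le hα hβ hb hac]
  exact treeCost_add_le hα hac

/-- The balanced split: the right part is the largest power of two below `n`. -/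
lemma exists_splitCost_eq (hα : 0 ≤ α) (hβ : 0 ≤ β) (hb : 0 ≤ b) {n : ℕ} (hn : 2 ≤ n) :
    ∃ a c, 1 ≤ a ∧ 1 ≤ c ∧ a + c = n ∧ splitCost α β b a c = treeCost α β b n := by
  set s := Nat.clog 2 n
  have hs : 1 ≤ s := Nat.clog_pos one_lt_two hn
  have hlt : 2 ^ (s - 1) < n := Nat.pow_pred_clog_lt_self one_lt_two hn
  have hle : n ≤ 2 ^ s := Nat.le_pow_clog one_lt_two n
  have hpow : 2 ^ s = 2 * 2 ^ (s - 1) := by rw [← pow_succ', Nat.sub_add_cancel hs]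
  have hsum : n - 2 ^ (s - 1) + 2 ^ (s - 1) = n := Nat.sub_add_cancel hlt.le
  have hlog : Nat.clog 2 (n - 2 ^ (s - 1) + 2 ^ (s - 1)) = Nat.clog 2 (2 ^ (s - 1)) + 1 := by
    rw [hsum, Nat.clog_pow 2 _ one_lt_two]
    omega
  refine ⟨n - 2 ^ (s - 1), 2 ^ (s - 1), by omega, Nat.one_le_two_pow, hsum, ?_⟩
  rw [splitCost_of_le hα hβ hb (by omega), ← treeCost_add_eq hlog, hsum]

end treeCost

theorem dpC_const (b α β : ℝ) (hb : 0 ≤ b) (hα : 0 ≤ α) (hβ : 0 ≤ β) {i j : ℕ} (hij : i ≤ j) :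
    dpC (fun _ => b) α β i j = treeCost α β b (j + 1 - i) := by
  induction hn : j - i using Nat.strong_induction_on generalizing i j with
  | _ n ih =>
    rcases hij.eq_or_lt with rfl | hij
    · simp [dpC_of_le, treeCost]
    have split : ∀ k ∈ Ico i j,
        max (dpC (fun _ => b) α β i k) (dpC (fun _ => b) α β (k + 1) j) +
          (α + β * min (segSum (fun _ => b) i k) (segSum (fun _ => b) (k + 1) j)) =
        splitCost α β b (k + 1 - i) (j + 1 - (k + 1)) := by
      intro k hk
      rw [mem_Ico] at hk
      rw [ih (k - i) (by omega) hk.1 rfl, ih (j - (k + 1)) (by omega) hk.2 rfl,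
        segSum_const, segSum_const, splitCost]
    apply le_antisymm
    · obtain ⟨a, c, ha, hc, hac, heq⟩ := exists_splitCost_eq hα hβ hb (n := j + 1 - i) (by omega)
      have hk : i + a - 1 ∈ Ico i j := by rw [mem_Ico]; omega
      calc dpC (fun _ => b) α β i j
          ≤ splitCost α β b (i + a - 1 + 1 - i) (j + 1 - (i + a - 1 + 1)) :=
            (dpC_le hk).trans_eq (split _ hk)
        _ = treeCost α β b (j + 1 - i) := by
            rw [← heq]; congr 1 <;> omega
    · refine le_dpC hij fun k hk => ?_
      rw [split k hk]
      convert treeCost_add_le_splitCost hα hβ hb (k + 1 - i) (j + 1 - (k + 1)) using 2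
      rw [mem_Ico] at hk
      omega

/-- Sanity check for the regular problem: for `p = 2^t` equal blocks of size `b`,
`C[0, p-1] = t * α + β * (2^t - 1) * b`. -/
theorem stmt_19 (t : ℕ) (b : ℝ) (hb : 0 ≤ b) (α β : ℝ) (hα : 0 ≤ α) (hβ : 0 ≤ β) :
    dpC (fun _ => b) α β 0 (2 ^ t - 1) =
      (t : ℝ) * α + β * (((2 ^ t - 1 : ℕ) : ℝ) * b) := by
  rw [dpC_const b α β hb hα hβ (Nat.zero_le _), Nat.sub_add_cancel Nat.one_le_two_pow,
    Nat.sub_zero, treeCost, Nat.clog_pow 2 t one_lt_two, Nat.cast_sub Nat.one_le_two_pow]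
  push_cast
  ring
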